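/- Let T ≥ 1, k ≥ 1, C ≥ 1. For t = 1,…,T let π^t and π̂^t be policies over H, x̄^t ∈ X^k, ȳ^t ∈ {0,1}^k, ρ̂^t ∈ X², and let ℓ^t ∈ [0,1]^{2k+4C} and a^h (h ∈ H) be the loss and action vectors of the reduction with parameters (x̄^t, ȳ^t, ρ̂^t, C). Suppose (i) the semi-bandit regret of the underlying policies satisfies Σ_{t=1}^T E_{h∼π^t}⟨a^h, ℓ^t⟩ − min_{h*∈H} Σ_{t=1}^T ⟨a^{h*}, ℓ^t⟩ ≤ B, and (ii) for each t, |E_{h∼π̂^t}⟨a^h, ℓ^t⟩ − E_{h∼π^t}⟨a^h, ℓ^t⟩| ≤ η^t for reals η^t ≥ 0. Then for every nonempty set V of policies over H: Σ_{t=1}^T L_{C,ρ̂^t}(π̂^t, x̄^t, ȳ^t) − inf_{π*∈V} Σ_{t=1}^T L_{C,ρ̂^t}(π*, x̄^t, ȳ^t) ≤ 2B + 2·Σ_{t=1}^T η^t. -/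
import Mathlib


open Finset

variable {X H : Type*}

/-- `π(x) = Pr_{h∼π}[h(x) = 1]`, where the hypothesis class is given by `f : H → X → Bool`. -/
noncomputable def polVal [Fintype H] (f : H → X → Bool) (π : H → ℝ) (x : X) : ℝ :=
  ∑ h, π h * (if f h x then 1 else 0)

/-- Misclassification loss `Error(π, x̄, ȳ) = Σ_i Pr_{h∼π}[h(x̄^i) ≠ ȳ^i]`. -/
noncomputable def errLoss [Fintype H] (f : H → X → Bool) (π : H → ℝ) {k : ℕ}
    (xb : Fin k → X) (yb : Fin k → Bool) : ℝ :=
  ∑ i, ∑ h, π h * (if f h (xb i) = yb i then 0 else 1)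

/-- Lagrangian loss `L_{C,ρ}(π, x̄, ȳ) = Error(π,x̄,ȳ) + C·(π(ρ^1) − π(ρ^2))`. -/
noncomputable def lagLoss [Fintype H] (f : H → X → Bool) (C : ℕ) (ρ : X × X) (π : H → ℝ)
    {k : ℕ} (xb : Fin k → X) (yb : Fin k → Bool) : ℝ :=
  errLoss f π xb yb + C * (polVal f π ρ.1 - polVal f π ρ.2)

/-- Augmented contexts `x̄̄ = (x̄^1,…,x̄^k, ρ^1,…,ρ^1, ρ^2,…,ρ^2)` (each `ρ^j` repeated `C` times). -/
def augX (C : ℕ) {k : ℕ} (xb : Fin k → X) (ρ : X × X) : Fin (k + 2*C) → X := fun i =>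
  if h : (i : ℕ) < k then xb ⟨i, h⟩ else if (i : ℕ) < k + C then ρ.1 else ρ.2

/-- Augmented labels `ȳ̄ = (ȳ^1,…,ȳ^k, 0,…,0, 1,…,1)` (`C` zeros then `C` ones). -/
def augY (C : ℕ) {k : ℕ} (yb : Fin k → Bool) : Fin (k + 2*C) → Bool := fun i =>
  if h : (i : ℕ) < k then yb ⟨i, h⟩ else if (i : ℕ) < k + C then false else true

/-- Loss vector of the reduction: `ℓ = (1−ȳ̄^1,…,1−ȳ̄^{k+2C}, 1/2,…,1/2) ∈ [0,1]^{2k+4C}`. -/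
noncomputable def lossVec (C : ℕ) {k : ℕ} (yb : Fin k → Bool) :
    Fin (k + 2*C) ⊕ Fin (k + 2*C) → ℝ :=
  Sum.elim (fun i => 1 - (if augY C yb i then (1:ℝ) else 0)) (fun _ => 1/2)

/-- Action vector of the reduction:
`a^h = (h(x̄̄^1),…,h(x̄̄^{k+2C}), 1−h(x̄̄^1),…,1−h(x̄̄^{k+2C})) ∈ {0,1}^{2k+4C}`. -/
def actVec (f : H → X → Bool) (C : ℕ) {k : ℕ} (xb : Fin k → X) (ρ : X × X) (h : H) :
    Fin (k + 2*C) ⊕ Fin (k + 2*C) → ℝ :=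
  Sum.elim (fun i => if f h (augX C xb ρ i) then 1 else 0)
    (fun i => 1 - (if f h (augX C xb ρ i) then (1:ℝ) else 0))

/-- Expected linear semi-bandit loss `E_{h∼π} ⟨a^h, ℓ⟩` of the reduction. -/
noncomputable def expLin [Fintype H] (f : H → X → Bool) (C : ℕ) {k : ℕ}
    (xb : Fin k → X) (yb : Fin k → Bool) (ρ : X × X) (π : H → ℝ) : ℝ :=
  ∑ h, π h * ∑ j, actVec f C xb ρ h j * lossVec C yb j

/-- Per-hypothesis Lagrangian loss `L_{C,ρ}(δ_h, x̄, ȳ)`. -/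
noncomputable def Lh (f : H → X → Bool) (C : ℕ) {k : ℕ} (xb : Fin k → X) (yb : Fin k → Bool)
    (ρ : X × X) (h : H) : ℝ :=
  (∑ i, if f h (xb i) = yb i then (0:ℝ) else 1) +
    C * ((if f h ρ.1 then (1:ℝ) else 0) - (if f h ρ.2 then (1:ℝ) else 0))

/-- The constant offset of the reduction. -/
noncomputable def cst (C : ℕ) {k : ℕ} (yb : Fin k → Bool) : ℝ :=
  (1/2) * (∑ i, (1 - if yb i then (1:ℝ) else 0)) + C

lemma sum_aug {X : Type*} (C k : ℕ) (xb : Fin k → X) (yb : Fin k → Bool) (ρ : X × X)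
    (g : X → Bool → ℝ) :
    ∑ i : Fin (k + 2*C), g (augX C xb ρ i) (augY C yb i)
      = (∑ i : Fin k, g (xb i) (yb i)) + C * g ρ.1 false + C * g ρ.2 true := by
  set G : ℕ → ℝ := fun i =>
    if h : i < k then g (xb ⟨i, h⟩) (yb ⟨i, h⟩) else if i < k + C then g ρ.1 false else g ρ.2 true
    with hG
  have h1 : ∀ i : Fin (k + 2*C), g (augX C xb ρ i) (augY C yb i) = G i := by
    intro i
    unfold augX augY
    simp only [hG]
    split_ifs <;> rfl
  rw [Finset.sum_congr rfl (fun i _ => h1 i), Fin.sum_univ_eq_sum_range]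
  rw [Finset.range_eq_Ico,
    ← Finset.sum_Ico_consecutive G (Nat.zero_le k) (Nat.le_add_right k (2*C)),
    ← Finset.sum_Ico_consecutive G (Nat.le_add_right k C) (by omega : k + C ≤ k + 2*C)]
  have e1 : ∑ i ∈ Finset.Ico 0 k, G i = ∑ i : Fin k, g (xb i) (yb i) := by
    rw [← Finset.range_eq_Ico, ← Fin.sum_univ_eq_sum_range G k]
    refine Finset.sum_congr rfl fun i _ => ?_
    simp [hG, i.isLt]
  have e2 : ∑ i ∈ Finset.Ico k (k + C), G i = C * g ρ.1 false := by
    have hc : ∀ i ∈ Finset.Ico k (k + C), G i = g ρ.1 false := by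
      intro i hi
      obtain ⟨hi1, hi2⟩ := Finset.mem_Ico.mp hi
      simp [hG, Nat.not_lt.mpr hi1, hi2]
    rw [Finset.sum_congr rfl hc, Finset.sum_const, Nat.card_Ico, Nat.add_sub_cancel_left,
      nsmul_eq_mul]
  have e3 : ∑ i ∈ Finset.Ico (k + C) (k + 2*C), G i = C * g ρ.2 true := by
    have hc : ∀ i ∈ Finset.Ico (k + C) (k + 2*C), G i = g ρ.2 true := by
      intro i hi
      obtain ⟨hi1, hi2⟩ := Finset.mem_Ico.mp hi
      have h1 : ¬ i < k := by omega
      have h2 : ¬ i < k + C := by omega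
      simp [hG, h1, h2]
    have hcard : k + 2*C - (k + C) = C := by omega
    rw [Finset.sum_congr rfl hc, Finset.sum_const, Nat.card_Ico, hcard, nsmul_eq_mul]
  rw [e1, e2, e3]
  ring

lemma inner_eq [Fintype H] (f : H → X → Bool) (C : ℕ) {k : ℕ} (xb : Fin k → X)
    (yb : Fin k → Bool) (ρ : X × X) (h : H) :
    ∑ j, actVec f C xb ρ h j * lossVec C yb j
      = (1/2) * Lh f C xb yb ρ h + cst C yb := by
  rw [Fintype.sum_sum_type]
  simp only [actVec, lossVec, Sum.elim_inl, Sum.elim_inr]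
  rw [← Finset.sum_add_distrib]
  have key := sum_aug C k xb yb ρ (fun x y =>
    (if f h x then (1:ℝ) else 0) * (1 - if y then (1:ℝ) else 0) +
      (1 - if f h x then (1:ℝ) else 0) * (1/2))
  rw [key]
  unfold Lh cst
  have e1 : ∀ i : Fin k,
      (if f h (xb i) then (1:ℝ) else 0) * (1 - if yb i then (1:ℝ) else 0) +
        (1 - if f h (xb i) then (1:ℝ) else 0) * (1/2)
      = (1/2) * ((if f h (xb i) = yb i then (0:ℝ) else 1) + (1 - if yb i then (1:ℝ) else 0)) := by
    intro i
    cases hfb : f h (xb i) <;> cases hyb : yb i <;> norm_num [hfb, hyb]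
  rw [Finset.sum_congr rfl (fun i _ => e1 i)]
  cases hf1 : f h ρ.1 <;> cases hf2 : f h ρ.2 <;>
    · simp only [hf1, hf2, Finset.mul_sum, Finset.sum_add_distrib, ← Finset.mul_sum]
      norm_num
      try ring

lemma lag_eq [Fintype H] (f : H → X → Bool) (C : ℕ) (ρ : X × X) (π : H → ℝ) {k : ℕ}
    (xb : Fin k → X) (yb : Fin k → Bool) :
    lagLoss f C ρ π xb yb = ∑ h, π h * Lh f C xb yb ρ h := by
  have expand : ∀ h : H, π h * Lh f C xb yb ρ h
      = (∑ i, π h * (if f h (xb i) = yb i then (0:ℝ) else 1))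
        + C * (π h * (if f h ρ.1 then (1:ℝ) else 0) - π h * (if f h ρ.2 then (1:ℝ) else 0)) := by
    intro h
    unfold Lh
    rw [mul_add, Finset.mul_sum]
    ring
  rw [Finset.sum_congr rfl fun h _ => expand h, Finset.sum_add_distrib, ← Finset.mul_sum,
    Finset.sum_sub_distrib]
  unfold lagLoss errLoss polVal
  rw [Finset.sum_comm]

lemma expLin_eq [Fintype H] (f : H → X → Bool) (C : ℕ) {k : ℕ} (xb : Fin k → X)
    (yb : Fin k → Bool) (ρ : X × X) (π : H → ℝ) (hπ1 : ∑ h, π h = 1) :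
    expLin f C xb yb ρ π = (1/2) * lagLoss f C ρ π xb yb + cst C yb := by
  unfold expLin
  rw [lag_eq]
  calc ∑ h, π h * ∑ j, actVec f C xb ρ h j * lossVec C yb j
      = ∑ h, ((1/2) * (π h * Lh f C xb yb ρ h) + π h * cst C yb) := by
        refine Finset.sum_congr rfl fun h _ => ?_
        rw [inner_eq]; ring
    _ = (1/2) * (∑ h, π h * Lh f C xb yb ρ h) + (∑ h, π h) * cst C yb := by
        rw [Finset.sum_add_distrib, Finset.mul_sum, Finset.sum_mul]
    _ = (1/2) * (∑ h, π h * Lh f C xb yb ρ h) + cst C yb := by rw [hπ1, one_mul]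

/-- Theorem 4.10 of the paper, abstracted: if the semi-bandit regret of the
underlying policies `π^t` is at most `B` and the expected linear losses of the estimated
policies `π̂^t` are `η^t`-close to those of `π^t`, then the Lagrangian regret of `(π̂^t)`
against any nonempty comparator set `V` is at most `2B + 2·Σ_t η^t`. -/
theorem statement11 [Fintype H] [Nonempty H] (f : H → X → Bool) {T k C : ℕ}
    (hT : 1 ≤ T) (hk : 1 ≤ k) (hC : 1 ≤ C)
    (π πh : Fin T → H → ℝ)
    (hπ0 : ∀ t h, 0 ≤ π t h) (hπ1 : ∀ t, ∑ h, π t h = 1)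
    (hπh0 : ∀ t h, 0 ≤ πh t h) (hπh1 : ∀ t, ∑ h, πh t h = 1)
    (xb : Fin T → Fin k → X) (yb : Fin T → Fin k → Bool) (ρh : Fin T → X × X)
    (B : ℝ) (η : Fin T → ℝ) (hη : ∀ t, 0 ≤ η t)
    (hB : (∑ t, expLin f C (xb t) (yb t) (ρh t) (π t)) -
        Finset.univ.inf' Finset.univ_nonempty
          (fun hstar => ∑ t, ∑ j, actVec f C (xb t) (ρh t) hstar j * lossVec C (yb t) j) ≤ B)
    (hclose : ∀ t, |expLin f C (xb t) (yb t) (ρh t) (πh t) -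
        expLin f C (xb t) (yb t) (ρh t) (π t)| ≤ η t)
    (V : Set (H → ℝ)) (hV : V.Nonempty)
    (hVpol : ∀ q ∈ V, (∀ h, 0 ≤ q h) ∧ ∑ h, q h = 1) :
    (∑ t, lagLoss f C (ρh t) (πh t) (xb t) (yb t)) -
        sInf ((fun q => ∑ t, lagLoss f C (ρh t) q (xb t) (yb t)) '' V) ≤
      2 * B + 2 * ∑ t, η t := by
  classical
  set F : H → ℝ := fun hstar =>
    ∑ t, ∑ j, actVec f C (xb t) (ρh t) hstar j * lossVec C (yb t) j with hF
  obtain ⟨h0, -, hh0⟩ := Finset.exists_mem_eq_inf' (Finset.univ_nonempty (α := H)) F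
  set M : ℝ := ∑ t, Lh f C (xb t) (yb t) (ρh t) h0 with hMdef
  set S : ℝ := ∑ t, cst C (yb t) with hSdef
  have hFeq : ∀ h : H, F h = (1/2) * (∑ t, Lh f C (xb t) (yb t) (ρh t) h) + S := by
    intro h
    simp only [hF, inner_eq, Finset.sum_add_distrib, ← Finset.mul_sum, hSdef]
  have hM_le : ∀ h : H, M ≤ ∑ t, Lh f C (xb t) (yb t) (ρh t) h := by
    intro h
    have h1 : F h0 ≤ F h := hh0 ▸ Finset.inf'_le F (Finset.mem_univ h)
    rw [hFeq, hFeq] at h1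
    linarith
  have hInf_ge : M ≤ sInf ((fun q => ∑ t, lagLoss f C (ρh t) q (xb t) (yb t)) '' V) := by
    apply le_csInf (hV.image _)
    rintro _ ⟨q, hq, rfl⟩
    obtain ⟨hq0, hq1⟩ := hVpol q hq
    calc M = ∑ h, q h * M := by rw [← Finset.sum_mul, hq1, one_mul]
      _ ≤ ∑ h, q h * ∑ t, Lh f C (xb t) (yb t) (ρh t) h :=
          Finset.sum_le_sum fun h _ => mul_le_mul_of_nonneg_left (hM_le h) (hq0 h)
      _ = ∑ t, ∑ h, q h * Lh f C (xb t) (yb t) (ρh t) h := by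
          simp only [Finset.mul_sum]; rw [Finset.sum_comm]
      _ = ∑ t, lagLoss f C (ρh t) q (xb t) (yb t) := by
          simp only [lag_eq]
  have hlagh : ∀ t, lagLoss f C (ρh t) (πh t) (xb t) (yb t)
      = 2 * expLin f C (xb t) (yb t) (ρh t) (πh t) - 2 * cst C (yb t) := by
    intro t
    rw [expLin_eq f C (xb t) (yb t) (ρh t) (πh t) (hπh1 t)]
    ring
  have hsum1 : ∑ t, lagLoss f C (ρh t) (πh t) (xb t) (yb t)
      = 2 * (∑ t, expLin f C (xb t) (yb t) (ρh t) (πh t)) - 2 * S := by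
    rw [Finset.sum_congr rfl fun t _ => hlagh t]
    simp [hSdef, Finset.sum_sub_distrib, Finset.mul_sum]
  have hclose' : ∑ t, expLin f C (xb t) (yb t) (ρh t) (πh t)
      ≤ (∑ t, expLin f C (xb t) (yb t) (ρh t) (π t)) + ∑ t, η t := by
    rw [← Finset.sum_add_distrib]
    refine Finset.sum_le_sum fun t _ => ?_
    have := (abs_le.mp (hclose t)).2
    linarith
  have hBineq : (∑ t, expLin f C (xb t) (yb t) (ρh t) (π t)) ≤ B + F h0 := by
    have := hB
    rw [hh0] at this
    linarith
  have hFh0 : F h0 = (1/2) * M + S := by rw [hFeq]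
  linarith
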